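/- Fix k ≥ 0. The number of equivalence classes of binary bracketings with n > k operation occurrences under the relation 's ~ t iff |left^i(s)| = |left^i(t)| for i = 1,…,k' equals Σ_{i=0}^{k} binom(n-1, i), a polynomial in n of degree k. -/

import Mathlib

/-- p-ary bracketings: terms over one variable `x` with one p-ary operation symbol `ω`. -/
inductive Brack (p : ℕ) : Type
  | x : Brack p
  | node : (Fin p → Brack p) → Brack p

namespace Brack

/-- occurrence number: number of occurrences of ω -/
def occ {p : ℕ} : Brack p → ℕ
  | .x => 0
  | .node f => 1 + ∑ i, occ (f i)

/-- length: number of occurrences of x -/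
def len {p : ℕ} : Brack p → ℕ
  | .x => 1
  | .node f => ∑ i, len (f i)

/-- evaluation of a bracketing in a groupoid, variables enumerated left-to-right
starting at position `j`. -/
def evalFrom {p : ℕ} {A : Type*} (op : (Fin p → A) → A) (v : ℕ → A) :
    Brack p → ℕ → A
  | .x, j => v j
  | .node f, j =>
      op (fun i => evalFrom op v (f i)
        (j + ∑ k ∈ Finset.univ.filter (· < i), len (f k)))

/-- the term function induced by a bracketing -/
def eval {p : ℕ} {A : Type*} (op : (Fin p → A) → A) (t : Brack p) (v : ℕ → A) : A :=
  evalFrom op v t 0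

/-- prefix word of a bracketing: `true` codes ω, `false` codes x -/
def word {p : ℕ} : Brack p → List Bool
  | .x => [false]
  | .node f => true :: (List.ofFn (fun i => word (f i))).flatten

/-- auxiliary: scan a word, recording 1 + number of x's before each ω -/
def STaux : List Bool → ℕ → List ℕ
  | [], _ => []
  | true :: w, c => (c + 1) :: STaux w c
  | false :: w, c => STaux w (c + 1)

/-- insertion tuple of a bracketing: the i-th entry is one plus the number
of x's preceding the i-th occurrence of ω in the prefix notation -/
def ST {p : ℕ} (t : Brack p) : List ℕ := STaux (word t) 0

/-- replace the i-th (0-based) occurrence of x in `t` by `s` -/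
def replaceLeaf {p : ℕ} : Brack p → ℕ → Brack p → Brack p
  | .x, i, s => if i = 0 then s else .x
  | .node f, i, s => .node (fun j =>
      let off := ∑ k ∈ Finset.univ.filter (· < j), len (f k)
      if off ≤ i ∧ i < off + len (f j) then replaceLeaf (f j) (i - off) s else f j)

/-- β_i : insertion of ω x … x at the i-th (1-based) occurrence of x -/
def beta {p : ℕ} (i : ℕ) (t : Brack p) : Brack p :=
  replaceLeaf t (i - 1) (.node (fun _ => .x))

/-- left depth: depth of leftmost leaf (binary case) -/
def dl : Brack 2 → ℕ
  | .x => 0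
  | .node f => dl (f 0) + 1

/-- right depth: depth of rightmost leaf (binary case) -/
def dr : Brack 2 → ℕ
  | .x => 0
  | .node f => dr (f 1) + 1

/-- left factor of a binary bracketing -/
def leftF : Brack 2 → Brack 2
  | .x => .x
  | .node f => f 0

/-- whether a bracketing is the single variable x -/
def isX {p : ℕ} : Brack p → Bool
  | .x => true
  | .node _ => false

/-- number of pairs of eggs, i.e. subterm occurrences of ω x x (binary case) -/
def eggs : Brack 2 → ℕ
  | .x => 0
  | .node f => (if isX (f 0) && isX (f 1) then 1 else 0) + eggs (f 0) + eggs (f 1)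

end Brack

/-- generalized Catalan numbers -/
def genCat (p : ℕ) : ℕ → ℕ
  | 0 => 1
  | n + 1 =>
      ∑ v ∈ (Finset.Nat.antidiagonalTuple p n).attach, ∏ k : Fin p, genCat p (v.1 k)
  decreasing_by
    have hv := Finset.Nat.mem_antidiagonalTuple.mp v.2
    have hle : v.1 k ≤ n := by
      calc v.1 k ≤ ∑ i, v.1 i :=
            Finset.single_le_sum (fun i _ => Nat.zero_le _) (Finset.mem_univ k)
        _ = n := hv
    omega

/-- the set M(n,k,p) of weakly increasing n-tuples of positive integers
with u_i ≤ (p-1)(i-1)+k (here indices are 0-based) -/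
def Mset (n k p : ℕ) : Set (Fin n → ℕ) :=
  {u | (∀ i : Fin n, 1 ≤ u i ∧ u i ≤ (p - 1) * (i : ℕ) + k) ∧
    ∀ i j : Fin n, i ≤ j → u i ≤ u j}

/-- the setoid identifying binary bracketings with the same lengths of the
first k iterated left factors -/
def leftSetoid (k n : ℕ) : Setoid {t : Brack 2 // Brack.occ t = n} :=
  ⟨fun s t => ∀ i ∈ Finset.Icc 1 k,
      Brack.len (Brack.leftF^[i] s.1) = Brack.len (Brack.leftF^[i] t.1),
    ⟨fun _ _ _ => rfl, fun h i hi => (h i hi).symm,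
      fun h1 h2 i hi => (h1 i hi).trans (h2 i hi)⟩⟩

/-!
Since `left^(i+1) t = left^i (left t)`, the profile `(|left t|, …, |left^(k+1) t|)` of `t` is
`|left t|` followed by the length-`k` profile of `left t`. The left factor of a bracketing with
`n + 1` occurrences of `ω` is an arbitrary bracketing with `j ≤ n` occurrences, so the number
`c k n` of profiles satisfies `c (k+1) (n+1) = ∑_{j ≤ n} c k j` and `c 0 n = c k 0 = 1`.
By Pascal's rule `∑_{i ≤ k} binom(n-1, i)` satisfies the same recursion, where the truncated
`0 - 1 = 0` makes the case `n = 0` come out as `1`.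
-/

namespace Brack

theorem len_eq_occ_add_one (t : Brack 2) : t.len = t.occ + 1 := by
  induction t with
  | x => rfl
  | node f ih => simp only [len, occ, Fin.sum_univ_two, ih]; omega

theorem exists_occ_eq (m : ℕ) : ∃ t : Brack 2, t.occ = m := by
  induction m with
  | zero => exact ⟨.x, rfl⟩
  | succ m ih =>
    obtain ⟨t, ht⟩ := ih
    exact ⟨.node ![.x, t], by simp [occ, Fin.sum_univ_two, ht]; omega⟩

theorem eq_x_of_occ_eq_zero {t : Brack 2} (h : t.occ = 0) : t = .x := by
  cases t with
  | x => rfl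
  | node f => simp [occ] at h

def leftProfile (k : ℕ) (t : Brack 2) : Fin k → ℕ := fun i => (leftF^[i + 1] t).len

theorem leftProfile_succ (k : ℕ) (t : Brack 2) :
    leftProfile (k + 1) t = Fin.cons t.leftF.len (leftProfile k t.leftF) := by
  funext i
  cases i using Fin.cases <;> simp [leftProfile, Function.iterate_succ_apply]

def leftProfiles (k n : ℕ) : Set (Fin k → ℕ) :=
  Set.range fun t : {t : Brack 2 // t.occ = n} => leftProfile k t.1

theorem nonempty_leftProfiles (k n : ℕ) : (leftProfiles k n).Nonempty := by
  obtain ⟨t, ht⟩ := exists_occ_eq n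
  exact ⟨_, ⟨t, ht⟩, rfl⟩

theorem card_leftProfiles_zero_left (n : ℕ) : Nat.card (leftProfiles 0 n) = 1 :=
  Nat.card_eq_one_iff_unique.mpr ⟨inferInstance, (nonempty_leftProfiles 0 n).to_subtype⟩

theorem card_leftProfiles_zero_right (k : ℕ) : Nat.card (leftProfiles k 0) = 1 := by
  have : Subsingleton {t : Brack 2 // t.occ = 0} :=
    ⟨fun s t => Subtype.ext ((eq_x_of_occ_eq_zero s.2).trans (eq_x_of_occ_eq_zero t.2).symm)⟩
  exact Nat.card_eq_one_iff_unique.mpr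
    ⟨(Set.subsingleton_range _).coe_sort, (nonempty_leftProfiles k 0).to_subtype⟩

def consLeftProfile (k n : ℕ) : (Σ j : Fin (n + 1), leftProfiles k j) → Fin (k + 1) → ℕ :=
  fun p => Fin.cons (p.1 + 1 : ℕ) p.2.1

theorem consLeftProfile_injective (k n : ℕ) : Function.Injective (consLeftProfile k n) := by
  rintro ⟨j, v, hv⟩ ⟨j', v', hv'⟩ h
  obtain ⟨hj, hvv⟩ := Fin.cons_injective2 h
  obtain rfl : j = j' := Fin.ext (Nat.succ_injective hj)
  obtain rfl : v = v' := hvv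
  rfl

theorem range_consLeftProfile (k n : ℕ) :
    Set.range (consLeftProfile k n) = leftProfiles (k + 1) (n + 1) := by
  ext v
  constructor
  · rintro ⟨⟨j, _, ⟨s, hs⟩, rfl⟩, rfl⟩
    obtain ⟨r, hr⟩ := exists_occ_eq (n - j)
    refine ⟨⟨.node ![s, r], ?_⟩, ?_⟩
    · simp [occ, Fin.sum_univ_two, hs, hr]; omega
    · simp [consLeftProfile, leftProfile_succ, leftF, len_eq_occ_add_one, hs]
  · rintro ⟨⟨t, ht⟩, rfl⟩
    cases t with
    | x => simp [occ] at ht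
    | node f =>
      have hj : (f 0).occ < n + 1 := by simp [occ, Fin.sum_univ_two] at ht; omega
      refine ⟨⟨⟨(f 0).occ, hj⟩, _, ⟨f 0, rfl⟩, rfl⟩, ?_⟩
      simp [consLeftProfile, leftProfile_succ, leftF, len_eq_occ_add_one]

end Brack

open Brack

theorem sum_range_sum_choose_pred (n k : ℕ) :
    ∑ j ∈ Finset.range (n + 1), ∑ i ∈ Finset.range (k + 1), (j - 1).choose i =
      ∑ i ∈ Finset.range (k + 2), n.choose i := by
  induction n with
  | zero => simp [Finset.sum_range_succ', Nat.choose_zero_succ]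
  | succ n ih =>
    rw [Finset.sum_range_succ, ih, Nat.add_sub_cancel, Finset.sum_range_succ' _ (k + 1),
      Finset.sum_range_succ' (fun i => (n + 1).choose i)]
    simp only [Nat.choose_succ_succ', Finset.sum_add_distrib, Nat.choose_zero_right]
    omega

theorem card_leftProfiles (k n : ℕ) :
    Nat.card (leftProfiles k n) = ∑ i ∈ Finset.range (k + 1), (n - 1).choose i := by
  induction k generalizing n with
  | zero => rw [card_leftProfiles_zero_left]; simp
  | succ k ih =>
    cases n with
    | zero =>
      rw [card_leftProfiles_zero_right]
      simp [Finset.sum_range_succ', Nat.choose_zero_succ]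
    | succ n =>
      have : ∀ j : ℕ, Finite (leftProfiles k j) := fun j =>
        Nat.finite_of_card_ne_zero (by rw [ih]; simp [Finset.sum_range_succ'])
      rw [← range_consLeftProfile, Nat.card_range_of_injective (consLeftProfile_injective k n),
        Nat.card_sigma]
      simp only [ih, Nat.add_sub_cancel]
      rw [Fin.sum_univ_eq_sum_range (fun j => ∑ i ∈ Finset.range (k + 1), (j - 1).choose i),
        sum_range_sum_choose_pred]

theorem leftSetoid_eq_ker (k n : ℕ) :
    leftSetoid k n = Setoid.ker fun t : {t : Brack 2 // t.occ = n} => leftProfile k t.1 := by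
  ext s t
  change (∀ i ∈ Finset.Icc 1 k, _) ↔ leftProfile k s.1 = leftProfile k t.1
  rw [funext_iff]
  constructor
  · intro h i
    exact h (i + 1) (Finset.mem_Icc.mpr ⟨by omega, i.isLt⟩)
  · intro h i hi
    obtain ⟨hi1, hik⟩ := Finset.mem_Icc.mp hi
    obtain ⟨j, rfl⟩ := Nat.exists_eq_add_of_le' hi1
    exact h ⟨j, hik⟩

theorem stmt_16_general (k n : ℕ) :
    Nat.card (Quotient (leftSetoid k n)) =
      ∑ i ∈ Finset.range (k + 1), Nat.choose (n - 1) i := by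
  rw [leftSetoid_eq_ker, Nat.card_congr (Setoid.quotientKerEquivRange _)]
  exact card_leftProfiles k n

theorem stmt_16 (k n : ℕ) (hn : k < n) :
    Nat.card (Quotient (leftSetoid k n)) =
      ∑ i ∈ Finset.range (k + 1), Nat.choose (n - 1) i :=
  stmt_16_general k n
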